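/- arXiv:1504.00985 — 5 statements merged into one kernel-verified Lean document; each statement's English description precedes it below -/
import Mathlib

section
/- Let φ_c(z) = z² + c with c ∈ ℚ, K/ℚ a finite Galois extension of degree d, and (z_0, ..., z_{N-1}) an exact N-cycle of φ_c in K (i.e., φ_c(z_j) = z_{j+1 mod N} and the z_j are pairwise distinct). Let g = gcd(N, d). Then either (i) there exist m ∈ ℤ/gℤ and a nontrivial τ ∈ Gal(K/ℚ) with z_{m·(N/g)} = τ(z_0), or (ii) for every nontrivial τ ∈ Gal(K/ℚ), the sets {z_0,...,z_{N-1}} and {τ(z_0),...,τ(z_{N-1})} are disjoint. -/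
/-!
A nontrivial automorphism τ that sends one point of the cycle to another commutes with φ_c
(as c ∈ ℚ), so it acts on the whole cycle as the rotation j ↦ j + a for some a ∈ ℤ/N.
Since τ^d = 1 and the points of the cycle are distinct, d • a = 0 in ℤ/N, which forces a to be
a multiple of N / gcd(N, d).
-/

theorem Nat.div_gcd_dvd_of_dvd_mul {N d x : ℕ} (hN : 0 < N) (h : N ∣ d * x) :
    N / N.gcd d ∣ x := by
  have hg : 0 < N.gcd d := Nat.gcd_pos_of_pos_left d hN
  refine (Nat.coprime_div_gcd_div_gcd hg).dvd_of_dvd_mul_left ?_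
  rw [Nat.div_mul_right_comm (Nat.gcd_dvd_right N d)]
  exact Nat.div_dvd_div (Nat.gcd_dvd_left N d) h

theorem ZMod.exists_eq_val_mul_div_gcd_of_nsmul_eq_zero {N d : ℕ} [NeZero N] {a : ZMod N}
    (h : d • a = 0) :
    ∃ m : ZMod (N.gcd d), a = ((m.val * (N / N.gcd d) : ℕ) : ZMod N) := by
  have hN : 0 < N := Nat.pos_of_neZero N
  have hdvd : N / N.gcd d ∣ a.val := by
    refine Nat.div_gcd_dvd_of_dvd_mul hN ((ZMod.natCast_eq_zero_iff _ _).mp ?_)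
    rw [Nat.cast_mul, ZMod.natCast_val, ZMod.cast_id, ← nsmul_eq_mul, h]
  obtain ⟨m, hm⟩ := hdvd
  have hmg : m < N.gcd d := by
    refine Nat.lt_of_mul_lt_mul_left (a := N / N.gcd d) ?_
    rw [← hm, Nat.div_mul_cancel (Nat.gcd_dvd_left N d)]
    exact ZMod.val_lt a
  refine ⟨m, ?_⟩
  rw [ZMod.val_cast_of_lt hmg, mul_comm, ← hm, ZMod.natCast_zmod_val]

theorem Function.Semiconj.add_const_of_commute {α : Type*} {N : ℕ} [NeZero N]
    {z : ZMod N → α} {f σ : α → α} (hz : Semiconj z (· + 1) f) (hσ : Function.Commute σ f)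
    {j k : ZMod N} (hjk : σ (z j) = z k) : Semiconj z (· + (k - j)) σ := by
  have hfrom : ∀ n : ℕ, σ (z (j + n)) = z (k + n) := by
    intro n
    induction n with
    | zero => simpa using hjk
    | succ n ih =>
      have hj : z (j + n + 1) = f (z (j + n)) := hz _
      have hk : z (k + n + 1) = f (z (k + n)) := hz _
      rw [Nat.cast_succ, ← add_assoc, ← add_assoc, hj, hk, ← ih, hσ.eq]
  intro t
  have ht := hfrom (t - j).val
  rw [ZMod.natCast_zmod_val, add_sub_cancel] at ht
  rw [ht]
  congr 1
  ring

theorem Function.Semiconj.nsmul_eq_zero_of_iterate_eq_id {α A : Type*} [AddMonoid A]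
    {z : A → α} {σ : α → α} {a : A} (hσ : Semiconj z (· + a) σ) (hz : Injective z)
    {d : ℕ} (hd : σ^[d] = id) : d • a = 0 := by
  have := (hσ.iterate_right d).eq 0
  rw [hd, add_right_iterate_apply, zero_add] at this
  exact hz this

theorem AlgEquiv.pow_finrank_eq_one {F K : Type*} [Field F] [Field K] [Algebra F K]
    [FiniteDimensional F K] [IsGalois F K] (τ : K ≃ₐ[F] K) : τ ^ Module.finrank F K = 1 := by
  rw [← IsGalois.card_aut_eq_finrank, Nat.card_eq_fintype_card]
  exact pow_card_eq_one

/-- Galois dichotomy for exact N-cycles of φ_c(z) = z² + c in a Galois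
extension K/ℚ of degree d: either some z_{m·(N/g)} is a nontrivial Galois
conjugate of z_0, or every nontrivial Galois conjugate of the orbit is
disjoint from the orbit. Here g = gcd(N, d). -/
theorem galois_dichotomy (N d : ℕ) (hN : 0 < N)
    (K : Type*) [Field K] [Algebra ℚ K] [FiniteDimensional ℚ K] [IsGalois ℚ K]
    (hd : Module.finrank ℚ K = d)
    (c : ℚ) (z : ZMod N → K)
    (hcyc : ∀ j : ZMod N, (z j) ^ 2 + algebraMap ℚ K c = z (j + 1))
    (hinj : Function.Injective z) :
    (∃ (m : ZMod (Nat.gcd N d)) (τ : K ≃ₐ[ℚ] K), τ ≠ 1 ∧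
        z ((m.val * (N / Nat.gcd N d) : ℕ) : ZMod N) = τ (z 0)) ∨
    (∀ τ : K ≃ₐ[ℚ] K, τ ≠ 1 → ∀ j k : ZMod N, τ (z j) ≠ z k) := by
  have : NeZero N := ⟨hN.ne'⟩
  refine or_iff_not_imp_right.mpr fun hmeet => ?_
  push Not at hmeet
  obtain ⟨τ, hτ, j, k, hjk⟩ := hmeet
  have hcomm : Function.Commute τ (fun x => x ^ 2 + algebraMap ℚ K c) := fun x => by simp
  have hrot : Function.Semiconj z (· + (k - j)) τ :=
    Function.Semiconj.add_const_of_commute (fun t => (hcyc t).symm) hcomm hjk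
  have hperiod : d • (k - j) = 0 := by
    refine hrot.nsmul_eq_zero_of_iterate_eq_id hinj ?_
    rw [← hd, ← AlgEquiv.coe_pow, τ.pow_finrank_eq_one]
    rfl
  obtain ⟨m, hm⟩ := ZMod.exists_eq_val_mul_div_gcd_of_nsmul_eq_zero hperiod
  refine ⟨m, τ, hτ, ?_⟩
  simpa [← hm] using hrot 0
end

section
/- Let φ_c(z) = z² + c with c ∈ ℚ, K/ℚ a finite Galois extension of degree d, and (z_0,...,z_{N-1}) an exact N-cycle of φ_c in K. If τ ∈ Gal(K/ℚ) satisfies τ(z_0) = z_k, then N divides k·d. -/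
/-!
Since `c` is rational, every `τ ∈ Gal(K/ℚ)` commutes with `φ_c`, so once `τ` sends `z₀` to `z_k`
it sends every `z_j` to `z_{j+k}`. Hence `τ^d` shifts the cycle by `d·k`; but `τ^d = id`, and the
cycle is exact, so `d·k ≡ 0 (mod N)`.
-/

namespace Function.Commute

variable {α : Type*} {N : ℕ} [NeZero N] {f σ : α → α} {z : ZMod N → α} {k : ZMod N}

theorem apply_cycle_eq_shift (hσ : Function.Commute σ f) (hcyc : ∀ j, f (z j) = z (j + 1))
    (h : σ (z 0) = z k) (j : ZMod N) : σ (z j) = z (j + k) := by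
  rw [← ZMod.natCast_zmod_val j]
  induction j.val with
  | zero => simpa using h
  | succ n ih =>
    calc σ (z ↑(n + 1)) = f (σ (z n)) := by rw [Nat.cast_succ, ← hcyc, hσ.eq]
      _ = z (↑(n + 1) + k) := by rw [ih, hcyc, Nat.cast_succ, add_right_comm]

theorem iterate_apply_cycle_eq_shift (hσ : Function.Commute σ f) (hcyc : ∀ j, f (z j) = z (j + 1))
    (h : σ (z 0) = z k) (m : ℕ) (j : ZMod N) : σ^[m] (z j) = z (j + m * k) := by
  induction m generalizing j with
  | zero => simp
  | succ m ih =>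
    rw [iterate_succ_apply, hσ.apply_cycle_eq_shift hcyc h, ih]
    congr 1
    push_cast
    ring

theorem natCast_mul_shift_eq_zero (hσ : Function.Commute σ f) (hcyc : ∀ j, f (z j) = z (j + 1))
    (hinj : Injective z) (h : σ (z 0) = z k) {m : ℕ} (hm : σ^[m] = id) :
    (m : ZMod N) * k = 0 := by
  have hfix := hσ.iterate_apply_cycle_eq_shift hcyc h m 0
  rw [hm, id, zero_add] at hfix
  exact (hinj hfix).symm

end Function.Commute

/-- If K/ℚ is Galois of degree d and τ ∈ Gal(K/ℚ) sends z_0 to z_k in an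
exact N-cycle of φ_c(z) = z² + c, then N divides k·d. -/
theorem period_divides (N d : ℕ) (hN : 0 < N)
    (K : Type*) [Field K] [Algebra ℚ K] [FiniteDimensional ℚ K] [IsGalois ℚ K]
    (hd : Module.finrank ℚ K = d)
    (c : ℚ) (z : ZMod N → K)
    (hcyc : ∀ j : ZMod N, (z j) ^ 2 + algebraMap ℚ K c = z (j + 1))
    (hinj : Function.Injective z)
    (τ : K ≃ₐ[ℚ] K) (k : ZMod N) (h : τ (z 0) = z k) :
    N ∣ k.val * d := by
  have : NeZero N := ⟨hN.ne'⟩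
  have hτd : (⇑τ)^[d] = id := by
    rw [← AlgEquiv.coe_pow, ← hd, ← IsGalois.card_aut_eq_finrank, pow_card_eq_one']
    rfl
  have hτφ : Function.Commute τ (fun x ↦ x ^ 2 + algebraMap ℚ K c) := fun x ↦ by simp
  have hdk := hτφ.natCast_mul_shift_eq_zero hcyc hinj h hτd
  rw [← ZMod.natCast_eq_zero_iff, Nat.cast_mul, ZMod.natCast_zmod_val, mul_comm, hdk]
end

section
/- Let φ_c(z) = z² + c with c ∈ ℚ, N even, K/ℚ a quadratic extension with nontrivial automorphism τ, and (z_0,...,z_{N-1}) an exact N-cycle of φ_c in K. If τ(z_0) = z_{N/2}, then for every j, z_j + z_{j + N/2} is rational, and in particular the trace z_0 + z_1 + ... + z_{N-1} of the cycle is rational. -/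
/-!
Since τ commutes with φ_c, the sequence j ↦ τ(z_j) is again the orbit of φ_c, started at
τ(z_0) = z_{N/2}; hence τ acts on the cycle as the shift j ↦ j + N/2, an involution because N is
even. So τ fixes each z_j + z_{j+N/2} and the whole trace, and in a quadratic extension the
fixed elements of a nontrivial automorphism are exactly the rationals.
-/

open Module

theorem AlgEquiv.exists_algebraMap_eq_of_apply_eq_self {F K : Type*} [Field F] [Field K]
    [Algebra F K] (hK : (finrank F K).Prime) {τ : K ≃ₐ[F] K} (hτ : τ ≠ 1) {x : K}
    (hx : τ x = x) : ∃ q : F, algebraMap F K q = x := by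
  have := Subalgebra.isSimpleOrder_of_finrank_prime F K hK
  have hmem : x ∈ AlgHom.equalizer (τ : K →ₐ[F] K) (AlgHom.id F K) := hx
  rcases eq_bot_or_eq_top (AlgHom.equalizer (τ : K →ₐ[F] K) (AlgHom.id F K)) with hbot | htop
  · rw [hbot] at hmem
    exact Algebra.mem_bot.1 hmem
  · refine absurd (AlgEquiv.ext fun y => ?_) hτ
    exact (htop ▸ Algebra.mem_top : y ∈ AlgHom.equalizer (τ : K →ₐ[F] K) (AlgHom.id F K))

theorem ZMod.sum_range_natCast {M : Type*} [AddCommMonoid M] (N : ℕ) [NeZero N]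
    (f : ZMod N → M) : ∑ j ∈ Finset.range N, f j = ∑ j : ZMod N, f j := by
  refine Finset.sum_nbij (fun j : ℕ => (j : ZMod N)) (by simp) ?_ ?_ (fun _ _ => rfl)
  · intro a ha b hb hab
    have hval := congrArg ZMod.val hab
    rwa [ZMod.val_cast_of_lt (Finset.mem_range.1 ha), ZMod.val_cast_of_lt (Finset.mem_range.1 hb)]
      at hval
  · intro j _
    exact ⟨j.val, Finset.mem_coe.2 (Finset.mem_range.2 j.val_lt), ZMod.natCast_zmod_val j⟩

theorem ZMod.natCast_half_add_self {N : ℕ} (hN : Even N) :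
    ((N / 2 : ℕ) : ZMod N) + ((N / 2 : ℕ) : ZMod N) = 0 := by
  rw [← Nat.cast_add, ← two_mul, Nat.two_mul_div_two_of_even hN, ZMod.natCast_self]

theorem ZMod.apply_eq_shift_of_commute {α : Type*} {N : ℕ} [NeZero N] {f σ : α → α}
    (hσ : Function.Commute σ f) {z : ZMod N → α} (hz : ∀ j, f (z j) = z (j + 1)) {m : ZMod N}
    (h0 : σ (z 0) = z m) (j : ZMod N) : σ (z j) = z (j + m) := by
  obtain ⟨k, rfl⟩ := ZMod.natCast_zmod_surjective j
  induction k with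
  | zero => simpa using h0
  | succ k ih => rw [Nat.cast_succ, ← hz, hσ.eq, ih, hz, add_right_comm]

theorem even_cycle_trace_rational_general (N : ℕ) (hN : 0 < N) (heven : Even N)
    (K : Type*) [Field K] [Algebra ℚ K]
    (hquad : Module.finrank ℚ K = 2)
    (c : ℚ) (z : ZMod N → K)
    (hcyc : ∀ j : ZMod N, (z j) ^ 2 + algebraMap ℚ K c = z (j + 1))
    (τ : K ≃ₐ[ℚ] K) (hτ : τ ≠ 1)
    (h : τ (z 0) = z ((N / 2 : ℕ) : ZMod N)) :
    (∀ j : ZMod N, ∃ q : ℚ,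
        algebraMap ℚ K q = z j + z (j + ((N / 2 : ℕ) : ZMod N))) ∧
    (∃ q : ℚ, algebraMap ℚ K q = ∑ j ∈ Finset.range N, z (j : ZMod N)) := by
  have : NeZero N := ⟨hN.ne'⟩
  set m : ZMod N := ((N / 2 : ℕ) : ZMod N)
  have hprime : (finrank ℚ K).Prime := hquad ▸ Nat.prime_two
  have hτφ : Function.Commute τ (fun x => x ^ 2 + algebraMap ℚ K c) := fun x => by
    simp only [map_add, map_pow, AlgEquiv.commutes]
  have hshift : ∀ j, τ (z j) = z (j + m) := ZMod.apply_eq_shift_of_commute hτφ hcyc h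
  refine ⟨fun j => τ.exists_algebraMap_eq_of_apply_eq_self hprime hτ ?_,
    τ.exists_algebraMap_eq_of_apply_eq_self hprime hτ ?_⟩
  · rw [map_add, hshift, hshift, add_assoc, ZMod.natCast_half_add_self heven, add_zero, add_comm]
  · rw [ZMod.sum_range_natCast N z, map_sum]
    simp only [hshift]
    exact Fintype.sum_equiv (Equiv.addRight m) _ _ fun _ => rfl

/-- For N even and K/ℚ quadratic with nontrivial automorphism τ, if
τ(z_0) = z_{N/2} for an exact N-cycle of φ_c(z) = z² + c, then each
z_j + z_{j+N/2} is rational, and in particular the trace of the cycle is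
rational. -/
theorem even_cycle_trace_rational (N : ℕ) (hN : 0 < N) (heven : Even N)
    (K : Type*) [Field K] [Algebra ℚ K] [FiniteDimensional ℚ K]
    (hquad : Module.finrank ℚ K = 2)
    (c : ℚ) (z : ZMod N → K)
    (hcyc : ∀ j : ZMod N, (z j) ^ 2 + algebraMap ℚ K c = z (j + 1))
    (hinj : Function.Injective z)
    (τ : K ≃ₐ[ℚ] K) (hτ : τ ≠ 1)
    (h : τ (z 0) = z ((N / 2 : ℕ) : ZMod N)) :
    (∀ j : ZMod N, ∃ q : ℚ,
        algebraMap ℚ K q = z j + z (j + ((N / 2 : ℕ) : ZMod N))) ∧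
    (∃ q : ℚ, algebraMap ℚ K q = ∑ j ∈ Finset.range N, z (j : ZMod N)) :=
  even_cycle_trace_rational_general N hN heven K hquad c z hcyc τ hτ h
end

section
/- Let c = -71/48 and φ_c(z) = z² + c over K = ℚ(√33). Then z_0 = -1 + √33/12, z_1 = -1/4 - √33/6, z_2 = -1/2 + √33/12, z_3 = conj(z_0), z_4 = conj(z_1), z_5 = conj(z_2) form an exact 6-cycle of φ_c: the six points are pairwise distinct, φ_c(z_j) = z_{(j+1) mod 6} for all j. -/
/-!
Write the points as `a + b s` with `a, b ∈ ℚ` and `s² = 33`. In these coordinates `z ↦ z² + c`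
acts by `(a, b) ↦ (a² + 33 b² + c, 2ab)` and the conjugation by `(a, b) ↦ (a, -b)`, so the cycle
relations become identities between six pairs of rationals. Distinct pairs give distinct points
because `33` is not a square in `ℚ`.
-/

section QuadraticCoordinates

variable {K : Type*} [Field K] [CharZero K] {d : ℚ} {s : K}

def ofCoords (s : K) (x : ℚ × ℚ) : K := x.1 + x.2 * s

def quadraticMapCoords (d c : ℚ) (x : ℚ × ℚ) : ℚ × ℚ :=
  (x.1 ^ 2 + d * x.2 ^ 2 + c, 2 * x.1 * x.2)

theorem ofCoords_injective (hd : ¬ IsSquare d) (hs : s ^ 2 = d) :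
    Function.Injective (ofCoords s) := by
  rintro ⟨a, b⟩ ⟨a', b'⟩ h
  simp only [ofCoords] at h
  by_cases hb : b = b'
  · subst hb
    simpa using h
  · refine absurd ⟨(a' - a) / (b - b'), ?_⟩ hd
    have hb' : ((b - b' : ℚ) : K) ≠ 0 := Rat.cast_ne_zero.mpr (sub_ne_zero.mpr hb)
    have hs' : s = ((a' - a) / (b - b') : ℚ) := by
      rw [Rat.cast_div, eq_div_iff hb']
      push_cast
      linear_combination h
    have hd' : ((d : ℚ) : K) = (((a' - a) / (b - b') * ((a' - a) / (b - b')) : ℚ) : K) := by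
      rw [← hs, hs', sq, Rat.cast_mul]
    exact_mod_cast hd'

theorem ofCoords_sq_add (hs : s ^ 2 = d) (c : ℚ) (x : ℚ × ℚ) :
    ofCoords s x ^ 2 + c = ofCoords s (quadraticMapCoords d c x) := by
  rw [ofCoords, ofCoords, quadraticMapCoords]
  push_cast
  linear_combination (x.2 : K) ^ 2 * hs

theorem AlgEquiv.map_ofCoords [Algebra ℚ K] (τ : K ≃ₐ[ℚ] K) (hτ : τ s = -s) (x : ℚ × ℚ) :
    τ (ofCoords s x) = ofCoords s (x.1, -x.2) := by
  simp only [ofCoords, map_add, map_mul, map_ratCast, hτ]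
  push_cast
  ring

end QuadraticCoordinates

-- `decide +kernel` throughout: arithmetic on `ℚ` does not reduce in the elaborator's `decide`.
theorem Rat.not_isSquare_33 : ¬ IsSquare (33 : ℚ) := by
  rw [Rat.isSquare_iff]
  decide +kernel

def sixCycleCoords : ZMod 6 → ℚ × ℚ :=
  ![(-1, 1 / 12), (-1 / 4, -1 / 6), (-1 / 2, 1 / 12), (-1, -1 / 12), (-1 / 4, 1 / 6), (-1 / 2, -1 / 12)]

theorem sixCycleCoords_injective : Function.Injective sixCycleCoords := by
  decide +kernel

theorem sixCycleCoords_add_three (j : ZMod 6) :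
    sixCycleCoords (j + 3) = ((sixCycleCoords j).1, -(sixCycleCoords j).2) := by
  revert j
  decide +kernel

theorem quadraticMapCoords_sixCycleCoords (j : ZMod 6) :
    quadraticMapCoords 33 (-71 / 48) (sixCycleCoords j) = sixCycleCoords (j + 1) := by
  revert j
  decide +kernel

theorem six_cycle_sqrt33_general
    (K : Type*) [Field K] [Algebra ℚ K]
    (s : K) (hs : s ^ 2 = 33)
    (τ : K ≃ₐ[ℚ] K) (hτ : τ s = -s)
    (z : ZMod 6 → K)
    (hz0 : z 0 = algebraMap ℚ K (-1) + s / 12)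
    (hz1 : z 1 = algebraMap ℚ K (-1 / 4) - s / 6)
    (hz2 : z 2 = algebraMap ℚ K (-1 / 2) + s / 12)
    (hz3 : z 3 = τ (z 0)) (hz4 : z 4 = τ (z 1)) (hz5 : z 5 = τ (z 2)) :
    Function.Injective z ∧
      ∀ j : ZMod 6, (z j) ^ 2 + algebraMap ℚ K (-71 / 48) = z (j + 1) := by
  have : CharZero K := charZero_of_injective_algebraMap (algebraMap ℚ K).injective
  have hs' : s ^ 2 = ((33 : ℚ) : K) := by exact_mod_cast hs
  have h0 : z 0 = ofCoords s (sixCycleCoords 0) := by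
    rw [hz0, eq_ratCast]; simp only [ofCoords, sixCycleCoords, Matrix.cons_val]; push_cast; ring
  have h1 : z 1 = ofCoords s (sixCycleCoords 1) := by
    rw [hz1, eq_ratCast]; simp only [ofCoords, sixCycleCoords, Matrix.cons_val]; push_cast; ring
  have h2 : z 2 = ofCoords s (sixCycleCoords 2) := by
    rw [hz2, eq_ratCast]; simp only [ofCoords, sixCycleCoords, Matrix.cons_val]; push_cast; ring
  have hz : z = ofCoords s ∘ sixCycleCoords := by
    funext j
    obtain rfl | rfl | rfl | rfl | rfl | rfl : j = 0 ∨ j = 1 ∨ j = 2 ∨ j = 3 ∨ j = 4 ∨ j = 5 := by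
      revert j; decide
    · exact h0
    · exact h1
    · exact h2
    · rw [hz3, h0, τ.map_ofCoords hτ, ← sixCycleCoords_add_three]; rfl
    · rw [hz4, h1, τ.map_ofCoords hτ, ← sixCycleCoords_add_three]; rfl
    · rw [hz5, h2, τ.map_ofCoords hτ, ← sixCycleCoords_add_three]; rfl
  subst hz
  refine ⟨(ofCoords_injective Rat.not_isSquare_33 hs').comp sixCycleCoords_injective, fun j => ?_⟩
  rw [eq_ratCast, Function.comp_apply, ofCoords_sq_add hs', quadraticMapCoords_sixCycleCoords]
  rfl

/-- In K = ℚ(√33), with c = -71/48, the six points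
z₀ = -1 + √33/12, z₁ = -1/4 - √33/6, z₂ = -1/2 + √33/12, z₃ = conj z₀,
z₄ = conj z₁, z₅ = conj z₂ form an exact 6-cycle of φ_c(z) = z² + c. -/
theorem six_cycle_sqrt33
    (K : Type*) [Field K] [Algebra ℚ K] [FiniteDimensional ℚ K]
    (hquad : Module.finrank ℚ K = 2)
    (s : K) (hs : s ^ 2 = 33)
    (τ : K ≃ₐ[ℚ] K) (hτ : τ s = -s)
    (z : ZMod 6 → K)
    (hz0 : z 0 = algebraMap ℚ K (-1) + s / 12)
    (hz1 : z 1 = algebraMap ℚ K (-1 / 4) - s / 6)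
    (hz2 : z 2 = algebraMap ℚ K (-1 / 2) + s / 12)
    (hz3 : z 3 = τ (z 0)) (hz4 : z 4 = τ (z 1)) (hz5 : z 5 = τ (z 2)) :
    Function.Injective z ∧
      ∀ j : ZMod 6, (z j) ^ 2 + algebraMap ℚ K (-71 / 48) = z (j + 1) :=
  six_cycle_sqrt33_general K s hs τ hτ z hz0 hz1 hz2 hz3 hz4 hz5
end

section
/- Let a, b, c ∈ ℚ satisfy a = 3 and λ_1(3, b, c) = λ_0(3, b, c) = 0, where λ_1 and λ_0 are the explicit polynomials below. Then there is no solution: for a = 3, the resultant in c of λ_1(3,b,c) and λ_0(3,b,c) is a polynomial in b whose only rational root is b = 0, but λ_1(3, 0, c) = -64 ≠ 0 for all c. -/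
/-!
For `a = 3` the coefficient of `c²` in `λ₁` vanishes, so `λ₁(3, b, c)` is linear in `c`, and
eliminating `c` from `λ₀(3, b, c)` leaves `b · S(b) = 0` with `S` an integer sextic. The root
`b = 0` is excluded because `λ₁(3, 0, c) = -64`. The sextic has no rational root: its
homogenisation `S(x, y)` has no zero over `ZMod 13` other than `(0, 0)`, while a rational root
`n / d` in lowest terms would give one at `(n, d)`.
-/

/-- λ₁(a,b,c) from the period-5 analysis. -/
def lam1 (a b c : ℚ) : ℚ :=
  16 * (a - 3) * (2 * b - a * (a - 3)) * c ^ 2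
    - 4 * (a ^ 5 - 10 * a ^ 4 - 4 * a ^ 3 * b + 46 * a ^ 3 + 30 * a ^ 2 * b
        + 3 * a * b ^ 2 - 104 * a ^ 2 - 92 * a * b - 10 * b ^ 2 + 95 * a
        + 104 * b - 24) * c
    - (8 * a ^ 5 - 74 * a ^ 4 - 32 * a ^ 3 * b + 271 * a ^ 3 + 222 * a ^ 2 * b
        + 24 * a * b ^ 2 - 452 * a ^ 2 - 542 * a * b - 74 * b ^ 2 + 325 * a
        + 452 * b - 110)

/-- λ₀(a,b,c) from the period-5 analysis. -/
def lam0 (a b c : ℚ) : ℚ :=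
  16 * b * (b - (a - 3) ^ 2) * c ^ 2
    - 4 * (a ^ 4 * b - 10 * a ^ 3 * b - 3 * a ^ 2 * b ^ 2 + 46 * a ^ 2 * b
        + 20 * a * b ^ 2 + b ^ 3 - 104 * a * b - 46 * b ^ 2 + 95 * b - 9) * c
    - (8 * a ^ 4 * b - 74 * a ^ 3 * b - 24 * a ^ 2 * b ^ 2 + 271 * a ^ 2 * b
        + 148 * a * b ^ 2 + 8 * b ^ 3 - 452 * a * b - 271 * b ^ 2 + 325 * b - 64)

theorem Rat.intCast_num_ne_zero_or_natCast_den_ne_zero (q : ℚ) {n : ℕ} (hn : n ≠ 1) :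
    (q.num : ZMod n) ≠ 0 ∨ (q.den : ZMod n) ≠ 0 := by
  by_contra! h
  obtain ⟨hnum, hden⟩ := h
  rw [ZMod.intCast_zmod_eq_zero_iff_dvd, ← Int.dvd_natAbs, Int.natCast_dvd_natCast] at hnum
  rw [ZMod.natCast_eq_zero_iff] at hden
  exact hn (Nat.eq_one_of_dvd_one (q.reduced ▸ Nat.dvd_gcd hnum hden))

def sexticForm {R : Type*} [CommRing R] (x y : R) : R :=
  6 * x ^ 6 + 79 * x ^ 5 * y + 266 * x ^ 4 * y ^ 2 - 2 * x ^ 3 * y ^ 3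
    - 828 * x ^ 2 * y ^ 4 - 2352 * x * y ^ 5 - 5760 * y ^ 6

section sexticForm

variable {R : Type*} [CommRing R]

theorem map_sexticForm {S : Type*} [CommRing S] (f : R →+* S) (x y : R) :
    f (sexticForm x y) = sexticForm (f x) (f y) := by
  simp [sexticForm, map_ofNat]

theorem sexticForm_mul_mul (t x y : R) :
    sexticForm (t * x) (t * y) = t ^ 6 * sexticForm x y := by
  unfold sexticForm
  ring

theorem sexticForm_zmod_thirteen_eq_zero {x y : ZMod 13} (h : sexticForm x y = 0) :
    x = 0 ∧ y = 0 := by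
  revert x y
  unfold sexticForm
  decide

theorem sexticForm_rat_ne_zero (b : ℚ) : sexticForm b 1 ≠ 0 := by
  intro hb
  have hZ : sexticForm b.num (b.den : ℤ) = 0 := by
    have hQ : sexticForm (b.num : ℚ) (b.den : ℚ) = 0 := by
      have h := sexticForm_mul_mul (b.den : ℚ) b 1
      rwa [hb, mul_zero, mul_one, mul_comm, Rat.mul_den_eq_num] at h
    rw [← Int.cast_eq_zero (α := ℚ), ← eq_intCast (Int.castRingHom ℚ), map_sexticForm]
    simpa using hQ
  have h13 := congrArg (Int.castRingHom (ZMod 13)) hZ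
  rw [map_sexticForm, map_zero] at h13
  obtain ⟨hnum, hden13⟩ := sexticForm_zmod_thirteen_eq_zero h13
  rcases b.intCast_num_ne_zero_or_natCast_den_ne_zero (n := 13) (by norm_num) with h | h
  · exact h (by simpa using hnum)
  · exact h (by simpa using hden13)

end sexticForm

/-- `λ₁(3, b, c)` is linear in `c`; substituting its root into `λ₀(3, b, c)` gives the resultant. -/
theorem b_mul_sexticForm_eq_zero_of_lam_three {b c : ℚ} (h1 : lam1 3 b c = 0)
    (h0 : lam0 3 b c = 0) : b * sexticForm b 1 = 0 := by
  unfold lam1 at h1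
  unfold lam0 at h0
  unfold sexticForm
  linear_combination ((16 * b ^ 2 * (4 * b ^ 2 + 40 * b) * c
      + (-4 * b ^ 3 + 52 * b ^ 2 - 32 * b + 36) * (4 * b ^ 2 + 40 * b)
      - 16 * b ^ 2 * (2 * b ^ 2 + 40 * b - 64)) / 16) * h1
    - ((4 * b ^ 2 + 40 * b) ^ 2 / 16) * h0

theorem lam1_three_zero (c : ℚ) : lam1 3 0 c = -64 := by
  unfold lam1
  ring

/-- Case a = 3 of the period-5 analysis admits no rational solution:
there are no b, c ∈ ℚ with λ₁(3,b,c) = λ₀(3,b,c) = 0. -/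
theorem no_solution_a_eq_three (a b c : ℚ) (ha : a = 3)
    (h1 : lam1 a b c = 0) (h0 : lam0 a b c = 0) : False := by
  subst ha
  rcases mul_eq_zero.mp (b_mul_sexticForm_eq_zero_of_lam_three h1 h0) with rfl | hb
  · rw [lam1_three_zero] at h1
    norm_num at h1
  · exact sexticForm_rat_ne_zero b hb
end
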